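/- arXiv:1312.4141 — 3 statements merged into one kernel-verified Lean document; each statement's English description precedes it below -/
import Mathlib

section
/- Let B be a closed ball in ℝⁿ with center y, and let Y be a non-empty compact convex set with Chebyshev center y. Then for every t ∈ [0,1], the Chebyshev center of the Minkowski combination tY + (1-t)B equals y. -/
open Metric Set Pointwise TopologicalSpace

/-- Support function of a subset of Euclidean space. -/
noncomputable def suppFn {n : ℕ} (Y : Set (EuclideanSpace ℝ (Fin n)))
    (u : EuclideanSpace ℝ (Fin n)) : ℝ :=
  sSup ((fun y => (inner ℝ y u : ℝ)) '' Y)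

/-- `Y` has constant width `d`. -/
def HasConstWidth {n : ℕ} (Y : Set (EuclideanSpace ℝ (Fin n))) (d : ℝ) : Prop :=
  ∀ u : EuclideanSpace ℝ (Fin n), ‖u‖ = 1 → suppFn Y u + suppFn Y (-u) = d

/-- Chebyshev radius: the minimal radius of a closed ball containing `Y`. -/
noncomputable def chebRadius {n : ℕ} (Y : Set (EuclideanSpace ℝ (Fin n))) : ℝ :=
  sInf {r : ℝ | ∃ c : EuclideanSpace ℝ (Fin n), Y ⊆ closedBall c r}

/-- `c` is the Chebyshev center of `Y`. -/
def IsChebCenter {n : ℕ} (c : EuclideanSpace ℝ (Fin n))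
    (Y : Set (EuclideanSpace ℝ (Fin n))) : Prop :=
  Y ⊆ closedBall c (chebRadius Y)

/-- mixing `Y` with a ball having the same Chebyshev center `y`
keeps the Chebyshev center at `y`. -/
theorem stmt_3 (n : ℕ) (y : EuclideanSpace ℝ (Fin n)) (r : ℝ) (hr : 0 ≤ r)
    (Y : Set (EuclideanSpace ℝ (Fin n)))
    (hne : Y.Nonempty) (hcomp : IsCompact Y) (hconv : Convex ℝ Y)
    (hc : IsChebCenter y Y) (t : ℝ) (ht : t ∈ Icc (0 : ℝ) 1) :
    IsChebCenter y (t • Y + (1 - t) • closedBall y r) := by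
  obtain ⟨ht0, ht1⟩ := ht
  have ht1' : (0:ℝ) ≤ 1 - t := by linarith
  set R := chebRadius Y with hRdef
  have hR0 : 0 ≤ R := by
    obtain ⟨a, ha⟩ := hne
    exact le_trans dist_nonneg (mem_closedBall.mp (hc ha))
  have hub : ∀ w ∈ t • Y + (1 - t) • closedBall y r, dist w y ≤ t * R + (1 - t) * r := by
    rintro w ⟨_, ⟨a, ha, rfl⟩, _, ⟨b, hb, rfl⟩, rfl⟩
    have h1 : ‖a - y‖ ≤ R := by simpa [dist_eq_norm] using hc ha
    have h2 : ‖b - y‖ ≤ r := by simpa [dist_eq_norm] using hb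
    have he : t • a + (1 - t) • b - y = t • (a - y) + (1 - t) • (b - y) := by module
    rw [dist_eq_norm, he]
    calc ‖t • (a - y) + (1 - t) • (b - y)‖
        ≤ ‖t • (a - y)‖ + ‖(1 - t) • (b - y)‖ := norm_add_le _ _
      _ = t * ‖a - y‖ + (1 - t) * ‖b - y‖ := by
          rw [norm_smul, norm_smul, Real.norm_of_nonneg ht0, Real.norm_of_nonneg ht1']
      _ ≤ t * R + (1 - t) * r := by gcongr
  intro z hz
  rw [mem_closedBall]
  have hSne : {ρ : ℝ | ∃ c : EuclideanSpace ℝ (Fin n),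
      (t • Y + (1 - t) • closedBall y r) ⊆ closedBall c ρ}.Nonempty :=
    ⟨t * R + (1 - t) * r, y, fun w hw => mem_closedBall.mpr (hub w hw)⟩
  rcases Nat.eq_zero_or_pos n with hn | hn
  · subst hn
    have hzy : z = y := Subsingleton.elim z y
    rw [hzy, dist_self, chebRadius]
    apply le_csInf hSne
    rintro ρ ⟨c, hcρ⟩
    exact le_trans dist_nonneg (mem_closedBall.mp (hcρ hz))
  · refine le_trans (hub z hz) ?_
    rw [chebRadius]
    apply le_csInf hSne
    rintro ρ ⟨c, hcρ⟩
    have hstep : ∀ a ∈ Y, ‖t • a + (1 - t) • y - c‖ + (1 - t) * r ≤ ρ := by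
      intro a ha
      set x := t • a + (1 - t) • y - c with hx
      obtain ⟨u, hu1, hux⟩ : ∃ u : EuclideanSpace ℝ (Fin n), ‖u‖ = 1 ∧
          ‖x + ((1 - t) * r) • u‖ = ‖x‖ + (1 - t) * r := by
        by_cases hx0 : x = 0
        · refine ⟨EuclideanSpace.single ⟨0, hn⟩ (1:ℝ), ?_, ?_⟩
          · simp [EuclideanSpace.norm_single]
          · rw [hx0, zero_add, norm_zero, zero_add, norm_smul,
              EuclideanSpace.norm_single, norm_one, mul_one, Real.norm_eq_abs,
              abs_of_nonneg (mul_nonneg ht1' hr)]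
        · refine ⟨‖x‖⁻¹ • x, ?_, ?_⟩
          · rw [norm_smul, norm_inv, norm_norm,
              inv_mul_cancel₀ (norm_ne_zero_iff.mpr hx0)]
          · have hnx : (0:ℝ) < ‖x‖ := norm_pos_iff.mpr hx0
            have hco : x + ((1 - t) * r) • ‖x‖⁻¹ • x
                = (1 + (1 - t) * r * ‖x‖⁻¹) • x := by
              rw [smul_smul, add_smul, one_smul]
            rw [hco, norm_smul, Real.norm_of_nonneg (by positivity)]
            field_simp
      have hb : y + r • u ∈ closedBall y r := by
        rw [mem_closedBall, dist_eq_norm]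
        simp [norm_smul, hu1, abs_of_nonneg hr]
      have hmem : t • a + (1 - t) • (y + r • u) ∈ t • Y + (1 - t) • closedBall y r :=
        ⟨t • a, ⟨a, ha, rfl⟩, (1 - t) • (y + r • u), ⟨y + r • u, hb, rfl⟩, rfl⟩
      have hd : dist (t • a + (1 - t) • (y + r • u)) c ≤ ρ := mem_closedBall.mp (hcρ hmem)
      have he2 : t • a + (1 - t) • (y + r • u) - c = x + ((1 - t) * r) • u := by
        rw [hx]; module
      rw [dist_eq_norm, he2, hux] at hd
      exact hd
    by_cases htz : t = 0
    · obtain ⟨a, ha⟩ := hne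
      have h := hstep a ha
      have h0 := norm_nonneg (t • a + (1 - t) • y - c)
      have hTR : t * R = 0 := by rw [htz]; ring
      linarith
    · have htpos : 0 < t := lt_of_le_of_ne ht0 (Ne.symm htz)
      have hYsub : Y ⊆ closedBall (t⁻¹ • (c - (1 - t) • y)) ((ρ - (1 - t) * r) / t) := by
        intro a ha
        have h := hstep a ha
        rw [mem_closedBall, dist_eq_norm]
        have he3 : a - t⁻¹ • (c - (1 - t) • y)
            = t⁻¹ • (t • a + (1 - t) • y - c) := by
          rw [smul_sub, smul_sub, smul_add, smul_smul, smul_smul,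
            inv_mul_cancel₀ htz, one_smul]
          module
        rw [he3, norm_smul, Real.norm_of_nonneg (by positivity), div_eq_inv_mul]
        have : ‖t • a + (1 - t) • y - c‖ ≤ ρ - (1 - t) * r := by linarith
        exact mul_le_mul_of_nonneg_left this (by positivity)
      have hbdd : BddBelow {s : ℝ | ∃ c' : EuclideanSpace ℝ (Fin n),
          Y ⊆ closedBall c' s} := by
        refine ⟨0, ?_⟩
        rintro s ⟨c', hc'⟩
        obtain ⟨a, ha⟩ := hne
        exact le_trans dist_nonneg (mem_closedBall.mp (hc' ha))
      have hRle : R ≤ (ρ - (1 - t) * r) / t := by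
        rw [hRdef, chebRadius]
        exact csInf_le hbdd ⟨_, hYsub⟩
      have := (le_div_iff₀ htpos).mp hRle
      linarith
end

section
/- For every non-empty closed subset K of [0,∞), the set of all non-empty compact convex subsets of ℝⁿ of constant width k for some k ∈ K is closed in the hyperspace of non-empty compact convex subsets of ℝⁿ with the Hausdorff metric topology. -/
open Metric Set Pointwise TopologicalSpace

private lemma suppFn_le_add {n : ℕ} {A B : Set (EuclideanSpace ℝ (Fin n))}
    (hA : IsCompact A) (hB : IsCompact B) (hAne : A.Nonempty) (hBne : B.Nonempty)
    {u : EuclideanSpace ℝ (Fin n)} (hu : ‖u‖ = 1) :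
    suppFn A u ≤ suppFn B u + hausdorffDist A B := by
  have hcont : Continuous fun y : EuclideanSpace ℝ (Fin n) => (inner ℝ y u : ℝ) :=
    Continuous.inner continuous_id continuous_const
  have hbddB : BddAbove ((fun y => (inner ℝ y u : ℝ)) '' B) :=
    (hB.image hcont).bddAbove
  have hfin : EMetric.hausdorffEdist A B ≠ ⊤ :=
    hausdorffEdist_ne_top_of_nonempty_of_bounded hAne hBne hA.isBounded hB.isBounded
  refine csSup_le (hAne.image _) ?_
  rintro _ ⟨a, ha, rfl⟩
  obtain ⟨b, hb, hdb⟩ := hB.exists_infDist_eq_dist hBne a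
  have h1 : (inner ℝ a u : ℝ) ≤ inner ℝ b u + dist a b := by
    have : (inner ℝ (a - b) u : ℝ) ≤ ‖a - b‖ * ‖u‖ := real_inner_le_norm _ _
    rw [hu, mul_one] at this
    have := inner_sub_left (𝕜 := ℝ) a b u ▸ this
    rw [dist_eq_norm]
    linarith
  have h2 : (inner ℝ b u : ℝ) ≤ suppFn B u := le_csSup hbddB ⟨b, hb, rfl⟩
  have h3 : dist a b ≤ hausdorffDist A B := by
    rw [← hdb]
    exact infDist_le_hausdorffDist_of_mem ha hfin
  linarith

private lemma abs_suppFn_sub_le {n : ℕ}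
    (A B : NonemptyCompacts (EuclideanSpace ℝ (Fin n)))
    {u : EuclideanSpace ℝ (Fin n)} (hu : ‖u‖ = 1) :
    |suppFn (A : Set (EuclideanSpace ℝ (Fin n))) u -
      suppFn (B : Set (EuclideanSpace ℝ (Fin n))) u| ≤ dist A B := by
  rw [abs_sub_le_iff, NonemptyCompacts.dist_eq]
  constructor
  · have := suppFn_le_add A.isCompact B.isCompact A.nonempty B.nonempty hu
    linarith
  · have := suppFn_le_add B.isCompact A.isCompact B.nonempty A.nonempty hu
    rw [hausdorffDist_comm] at this
    linarith

private lemma tendsto_suppFn {n : ℕ}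
    {f : ℕ → NonemptyCompacts (EuclideanSpace ℝ (Fin n))}
    {Y : NonemptyCompacts (EuclideanSpace ℝ (Fin n))}
    (hf : Filter.Tendsto f Filter.atTop (nhds Y))
    {u : EuclideanSpace ℝ (Fin n)} (hu : ‖u‖ = 1) :
    Filter.Tendsto (fun m => suppFn ((f m : Set (EuclideanSpace ℝ (Fin n)))) u)
      Filter.atTop (nhds (suppFn (Y : Set (EuclideanSpace ℝ (Fin n))) u)) := by
  rw [tendsto_iff_dist_tendsto_zero]
  have hd : Filter.Tendsto (fun m => dist (f m) Y) Filter.atTop (nhds 0) :=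
    tendsto_iff_dist_tendsto_zero.1 hf
  refine squeeze_zero (fun m => dist_nonneg) (fun m => ?_) hd
  rw [Real.dist_eq]
  exact abs_suppFn_sub_le (f m) Y hu

/-- for `K ⊆ [0,∞)` nonempty closed, the compact convex sets of
constant width `k ∈ K` form a closed subset of the hyperspace. -/
theorem stmt_4 (n : ℕ) (K : Set ℝ) (hKne : K.Nonempty) (hKcl : IsClosed K)
    (hK : K ⊆ Ici (0 : ℝ)) :
    IsClosed {Y : NonemptyCompacts (EuclideanSpace ℝ (Fin n)) |
      Convex ℝ (Y : Set (EuclideanSpace ℝ (Fin n))) ∧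
        ∃ k ∈ K, HasConstWidth (Y : Set (EuclideanSpace ℝ (Fin n))) k} := by
  apply IsSeqClosed.isClosed
  intro f Y hf hlim
  have hconv : Convex ℝ (Y : Set (EuclideanSpace ℝ (Fin n))) := by
    intro x hx y hy a b ha hb hab
    have hmem : a • x + b • y ∈ closure (Y : Set (EuclideanSpace ℝ (Fin n))) := by
      rw [Metric.mem_closure_iff]
      intro ε hε
      obtain ⟨m, hm⟩ := (Metric.tendsto_atTop.1 hlim) (ε / 3) (by linarith)
      have hdist : hausdorffDist (Y : Set (EuclideanSpace ℝ (Fin n)))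
          ((f m : Set (EuclideanSpace ℝ (Fin n)))) < ε / 3 := by
        have := hm m le_rfl
        rwa [NonemptyCompacts.dist_eq, hausdorffDist_comm] at this
      have hdist' : hausdorffDist ((f m : Set (EuclideanSpace ℝ (Fin n))))
          (Y : Set (EuclideanSpace ℝ (Fin n))) < ε / 3 := by
        rwa [hausdorffDist_comm]
      have hfin : EMetric.hausdorffEdist (Y : Set (EuclideanSpace ℝ (Fin n)))
          ((f m : Set (EuclideanSpace ℝ (Fin n)))) ≠ ⊤ :=
        hausdorffEdist_ne_top_of_nonempty_of_bounded Y.nonempty (f m).nonempty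
          Y.isCompact.isBounded (f m).isCompact.isBounded
      obtain ⟨x', hx', hxx'⟩ := exists_dist_lt_of_hausdorffDist_lt hx hdist hfin
      obtain ⟨y', hy', hyy'⟩ := exists_dist_lt_of_hausdorffDist_lt hy hdist hfin
      have hz0 : a • x' + b • y' ∈ ((f m : Set (EuclideanSpace ℝ (Fin n)))) :=
        (hf m).1 hx' hy' ha hb hab
      obtain ⟨z, hz, hzz⟩ := exists_dist_lt_of_hausdorffDist_lt hz0 hdist'
        (by rw [EMetric.hausdorffEdist_comm]; exact hfin)
      refine ⟨z, hz, ?_⟩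
      have h1 : dist (a • x + b • y) (a • x' + b • y') ≤
          a * dist x x' + b * dist y y' := by
        calc dist (a • x + b • y) (a • x' + b • y')
            ≤ dist (a • x) (a • x') + dist (b • y) (b • y') := dist_add_add_le _ _ _ _
          _ = |a| * dist x x' + |b| * dist y y' := by rw [dist_smul₀, dist_smul₀]; rfl
          _ = a * dist x x' + b * dist y y' := by
              rw [abs_of_nonneg ha, abs_of_nonneg hb]
      have h2 : a * dist x x' + b * dist y y' ≤ ε / 3 := by
        have := mul_le_mul_of_nonneg_left hxx'.le ha
        have := mul_le_mul_of_nonneg_left hyy'.le hb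
        nlinarith
      calc dist (a • x + b • y) z
          ≤ dist (a • x + b • y) (a • x' + b • y') + dist (a • x' + b • y') z :=
            dist_triangle _ _ _
        _ < ε / 3 + ε / 3 := by
            have := h1.trans h2
            linarith
        _ < ε := by linarith
    rwa [Y.isCompact.isClosed.closure_eq] at hmem
  refine ⟨hconv, ?_⟩
  rcases Nat.eq_zero_or_pos n with rfl | hn
  · obtain ⟨k, hk⟩ := hKne
    refine ⟨k, hk, fun u hu => ?_⟩
    have : u = 0 := Subsingleton.elim u 0
    rw [this] at hu
    simp at hu
  · have hFin : Nonempty (Fin n) := ⟨⟨0, hn⟩⟩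
    set u₀ : EuclideanSpace ℝ (Fin n) := EuclideanSpace.single ⟨0, hn⟩ (1 : ℝ) with hu₀def
    have hu₀ : ‖u₀‖ = 1 := by
      rw [hu₀def, EuclideanSpace.norm_single]; norm_num
    have hu₀' : ‖-u₀‖ = 1 := by rw [norm_neg]; exact hu₀
    set kseq : ℕ → ℝ := fun m =>
      suppFn ((f m : Set (EuclideanSpace ℝ (Fin n)))) u₀ +
        suppFn ((f m : Set (EuclideanSpace ℝ (Fin n)))) (-u₀) with hkseq
    have hkm : ∀ m, kseq m ∈ K := by
      intro m
      obtain ⟨k, hkK, hw⟩ := (hf m).2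
      have := hw u₀ hu₀
      rw [hkseq]
      simpa [this] using hkK
    set kLim : ℝ := suppFn (Y : Set (EuclideanSpace ℝ (Fin n))) u₀ +
        suppFn (Y : Set (EuclideanSpace ℝ (Fin n))) (-u₀) with hkLim
    have hktend : Filter.Tendsto kseq Filter.atTop (nhds kLim) :=
      Filter.Tendsto.add (tendsto_suppFn hlim hu₀) (tendsto_suppFn hlim hu₀')
    have hkK : kLim ∈ K := hKcl.mem_of_tendsto hktend (Filter.Eventually.of_forall hkm)
    refine ⟨kLim, hkK, fun u hu => ?_⟩
    have hu' : ‖-u‖ = 1 := by rw [norm_neg]; exact hu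
    have htend : Filter.Tendsto (fun m =>
        suppFn ((f m : Set (EuclideanSpace ℝ (Fin n)))) u +
          suppFn ((f m : Set (EuclideanSpace ℝ (Fin n)))) (-u)) Filter.atTop
        (nhds (suppFn (Y : Set (EuclideanSpace ℝ (Fin n))) u +
          suppFn (Y : Set (EuclideanSpace ℝ (Fin n))) (-u))) :=
      Filter.Tendsto.add (tendsto_suppFn hlim hu) (tendsto_suppFn hlim hu')
    have heq : ∀ m, suppFn ((f m : Set (EuclideanSpace ℝ (Fin n)))) u +
        suppFn ((f m : Set (EuclideanSpace ℝ (Fin n)))) (-u) = kseq m := by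
      intro m
      obtain ⟨k, hkK', hw⟩ := (hf m).2
      rw [hw u hu, hkseq]
      simp [hw u₀ hu₀]
    rw [show (fun m => suppFn ((f m : Set (EuclideanSpace ℝ (Fin n)))) u +
        suppFn ((f m : Set (EuclideanSpace ℝ (Fin n)))) (-u)) = kseq from funext heq] at htend
    exact tendsto_nhds_unique htend hktend
end

section
/- For every d > 0 and x ∈ ℝⁿ, the set of compact convex subsets of ℝⁿ of constant width d with Chebyshev center x is contractible; in fact, the straight-line Minkowski homotopy H(A,t) = tA + (1-t)B(x,d/2) contracts it to the ball B(x,d/2) within this set. -/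
open Metric Set Pointwise TopologicalSpace

namespace Stmt7Aux

variable {n : ℕ} {A B : Set (EuclideanSpace ℝ (Fin n))}
  {u c x : EuclideanSpace ℝ (Fin n)} {r s t d : ℝ}

lemma bddAbove_img (hA : IsCompact A) : BddAbove ((fun y => (inner ℝ y u : ℝ)) '' A) :=
  (hA.image (continuous_id.inner continuous_const)).bddAbove

lemma le_suppFn (hA : IsCompact A) (hy : u ∈ A) (v : EuclideanSpace ℝ (Fin n)) :
    (inner ℝ u v : ℝ) ≤ suppFn A v :=
  le_csSup (bddAbove_img hA) ⟨u, hy, rfl⟩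

lemma suppFn_le (hA : A.Nonempty) (h : A ⊆ closedBall c r) (hu : ‖u‖ = 1) :
    suppFn A u ≤ (inner ℝ c u : ℝ) + r := by
  apply csSup_le (hA.image _)
  rintro z ⟨y, hy, rfl⟩
  have h1 : (inner ℝ (y - c) u : ℝ) ≤ r := by
    calc (inner ℝ (y - c) u : ℝ) ≤ ‖y - c‖ * ‖u‖ := real_inner_le_norm _ _
    _ ≤ r := by rw [hu, mul_one]; exact mem_closedBall_iff_norm.mp (h hy)
  have := inner_sub_left (𝕜 := ℝ) y c u
  linarith

lemma suppFn_closedBall (hr : 0 ≤ r) (hu : ‖u‖ = 1) :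
    suppFn (closedBall c r) u = (inner ℝ c u : ℝ) + r := by
  apply le_antisymm (suppFn_le (nonempty_closedBall.2 hr) (subset_refl _) hu)
  have hmem : c + r • u ∈ closedBall c r := by
    simp [mem_closedBall_iff_norm, norm_smul, hu, abs_of_nonneg hr]
  have h : (inner ℝ (c + r • u) u : ℝ) = inner ℝ c u + r := by
    rw [inner_add_left, real_inner_smul_left, real_inner_self_eq_norm_sq, hu]
    ring
  calc (inner ℝ c u : ℝ) + r = inner ℝ (c + r • u) u := h.symm
  _ ≤ _ := le_suppFn (isCompact_closedBall c r) hmem u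

lemma img_smul (v : EuclideanSpace ℝ (Fin n)) :
    (fun y => (inner ℝ y v : ℝ)) '' (s • A) = s • ((fun y => (inner ℝ y v : ℝ)) '' A) := by
  ext z
  simp only [mem_image, mem_smul_set, smul_eq_mul]
  constructor
  · rintro ⟨y, ⟨a, ha, rfl⟩, rfl⟩
    exact ⟨inner ℝ a v, ⟨a, ha, rfl⟩, (real_inner_smul_left a v s).symm⟩
  · rintro ⟨w, ⟨a, ha, rfl⟩, rfl⟩
    exact ⟨s • a, ⟨a, ha, rfl⟩, real_inner_smul_left a v s⟩

lemma suppFn_smul (hs : 0 ≤ s) (v : EuclideanSpace ℝ (Fin n)) :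
    suppFn (s • A) v = s * suppFn A v := by
  rw [suppFn, img_smul, Real.sSup_smul_of_nonneg hs, smul_eq_mul, suppFn]

lemma img_add (v : EuclideanSpace ℝ (Fin n)) :
    (fun y => (inner ℝ y v : ℝ)) '' (A + B) =
      (fun y => (inner ℝ y v : ℝ)) '' A + (fun y => (inner ℝ y v : ℝ)) '' B := by
  ext z
  simp only [mem_image, mem_add]
  constructor
  · rintro ⟨y, ⟨a, ha, b, hb, rfl⟩, rfl⟩
    exact ⟨inner ℝ a v, ⟨a, ha, rfl⟩, inner ℝ b v, ⟨b, hb, rfl⟩, (inner_add_left a b v).symm⟩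
  · rintro ⟨w1, ⟨a, ha, rfl⟩, w2, ⟨b, hb, rfl⟩, rfl⟩
    exact ⟨a + b, ⟨a, ha, b, hb, rfl⟩, inner_add_left a b v⟩

lemma suppFn_add (hA : A.Nonempty) (hAc : IsCompact A) (hB : B.Nonempty) (hBc : IsCompact B)
    (v : EuclideanSpace ℝ (Fin n)) :
    suppFn (A + B) v = suppFn A v + suppFn B v := by
  rw [suppFn, img_add, csSup_add (hA.image _) (bddAbove_img hAc) (hB.image _) (bddAbove_img hBc)]
  rfl

lemma subset_closedBall_of_suppFn_le (hAc : IsCompact A)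
    (h : ∀ v : EuclideanSpace ℝ (Fin n), ‖v‖ = 1 → suppFn A v ≤ (inner ℝ c v : ℝ) + r)
    (hr : 0 ≤ r) : A ⊆ closedBall c r := by
  intro a ha
  rw [mem_closedBall_iff_norm]
  rcases eq_or_ne a c with rfl | hne
  · simpa using hr
  · have hnorm : ‖a - c‖ ≠ 0 := by simpa [sub_eq_zero] using hne
    set v := ‖a - c‖⁻¹ • (a - c) with hv
    have hv1 : ‖v‖ = 1 := by rw [hv, norm_smul, norm_inv, norm_norm, inv_mul_cancel₀ hnorm]
    have h1 : (inner ℝ a v : ℝ) ≤ inner ℝ c v + r := (le_suppFn hAc ha v).trans (h v hv1)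
    have h2 : (inner ℝ (a - c) v : ℝ) = ‖a - c‖ := by
      rw [hv, real_inner_smul_right, real_inner_self_eq_norm_sq]
      field_simp
    have := inner_sub_left (𝕜 := ℝ) a c v
    linarith

lemma bddBelow_radSet (hA : A.Nonempty) :
    BddBelow {r : ℝ | ∃ c : EuclideanSpace ℝ (Fin n), A ⊆ closedBall c r} := by
  refine ⟨0, fun r' ⟨c', hc'⟩ => ?_⟩
  obtain ⟨a, ha⟩ := hA
  exact le_trans dist_nonneg (mem_closedBall.mp (hc' ha))

lemma chebRadius_le (hA : A.Nonempty) (h : A ⊆ closedBall c r) : chebRadius A ≤ r :=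
  csInf_le (bddBelow_radSet hA) ⟨c, h⟩

lemma le_chebRadius (hne : A ⊆ closedBall c r)
    (h : ∀ (c' : EuclideanSpace ℝ (Fin n)) (r' : ℝ), A ⊆ closedBall c' r' → s ≤ r') :
    s ≤ chebRadius A :=
  le_csInf ⟨r, c, hne⟩ (fun r' ⟨c', hc'⟩ => h c' r' hc')

lemma chebRadius_nonneg (hA : A.Nonempty) (hne : A ⊆ closedBall c r) : 0 ≤ chebRadius A :=
  le_chebRadius hne fun c' r' h' => by
    obtain ⟨a, ha⟩ := hA
    exact le_trans dist_nonneg (mem_closedBall.mp (h' ha))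

lemma exists_unit (hn : n ≠ 0) : ∃ u : EuclideanSpace ℝ (Fin n), ‖u‖ = 1 :=
  ⟨EuclideanSpace.single (⟨0, Nat.pos_of_ne_zero hn⟩ : Fin n) (1 : ℝ), by
    simp [EuclideanSpace.norm_single]⟩

lemma subsingleton_E (hn : n = 0) : Subsingleton (EuclideanSpace ℝ (Fin n)) := by
  subst hn
  exact ⟨fun a b => PiLp.ext fun i => i.elim0⟩

lemma radius_mono (hu : ∃ u : EuclideanSpace ℝ (Fin n), ‖u‖ = 1) (hr : 0 ≤ r)
    (h : closedBall x r ⊆ closedBall c s) : r ≤ s := by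
  obtain ⟨u, hu1⟩ := hu
  have h1 : x + r • u ∈ closedBall c s :=
    h (by simp [mem_closedBall_iff_norm, norm_smul, hu1, abs_of_nonneg hr])
  have h2 : x - r • u ∈ closedBall c s :=
    h (by simp [mem_closedBall_iff_norm, norm_smul, hu1, abs_of_nonneg hr])
  have h3 : dist (x + r • u) (x - r • u) ≤ 2 * s :=
    (dist_triangle _ c _).trans (by
      linarith [mem_closedBall.mp h1, dist_comm (x - r • u) c ▸ mem_closedBall.mp h2])
  have h4 : dist (x + r • u) (x - r • u) = 2 * r := by
    rw [dist_eq_norm]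
    have he : (x + r • u) - (x - r • u) = (2 * r) • u := by
      rw [two_mul, add_smul]; abel
    rw [he, norm_smul, hu1]
    simp [abs_of_nonneg hr, mul_nonneg, hr]
  linarith

lemma isChebCenter_ball (hr : 0 ≤ r) : IsChebCenter x (closedBall x r) := by
  rcases eq_or_ne n 0 with hn | hn
  · have := subsingleton_E hn
    intro y _
    rw [mem_closedBall, Subsingleton.elim y x, dist_self]
    exact chebRadius_nonneg (nonempty_closedBall.2 hr) (subset_refl _)
  · exact closedBall_subset_closedBall
      (le_chebRadius (subset_refl _) fun c' r' h' => radius_mono (exists_unit hn) hr h')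

lemma subset_ball_self_of_width (hd : 0 ≤ d) (hAc : IsCompact A) (hw : HasConstWidth A d)
    {a₀ : EuclideanSpace ℝ (Fin n)} (ha₀ : a₀ ∈ A) : A ⊆ closedBall a₀ d := by
  intro a ha
  rw [mem_closedBall_iff_norm]
  rcases eq_or_ne a a₀ with rfl | hne
  · simpa using hd
  · have hnorm : ‖a - a₀‖ ≠ 0 := by simpa [sub_eq_zero] using hne
    set v := ‖a - a₀‖⁻¹ • (a - a₀) with hv
    have hv1 : ‖v‖ = 1 := by rw [hv, norm_smul, norm_inv, norm_norm, inv_mul_cancel₀ hnorm]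
    have h1 : (inner ℝ a v : ℝ) ≤ suppFn A v := le_suppFn hAc ha v
    have h2 : (inner ℝ a₀ (-v) : ℝ) ≤ suppFn A (-v) := le_suppFn hAc ha₀ (-v)
    have h4 := hw v hv1
    have h5 : (inner ℝ a₀ (-v) : ℝ) = -(inner ℝ a₀ v : ℝ) := inner_neg_right a₀ v
    have h3 : (inner ℝ (a - a₀) v : ℝ) = ‖a - a₀‖ := by
      rw [hv, real_inner_smul_right, real_inner_self_eq_norm_sq]
      field_simp
    have h6 := inner_sub_left (𝕜 := ℝ) a a₀ v
    linarith

/-- Bodies of constant width `d` with Chebyshev center `x` lie in `closedBall x d`. -/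
lemma subset_ball_x (hd : 0 ≤ d) (hA : A.Nonempty) (hAc : IsCompact A)
    (hw : HasConstWidth A d) (hcheb : IsChebCenter x A) : A ⊆ closedBall x d := by
  obtain ⟨a₀, ha₀⟩ := hA
  have h1 : chebRadius A ≤ d :=
    chebRadius_le ⟨a₀, ha₀⟩ (subset_ball_self_of_width hd hAc hw ha₀)
  exact hcheb.trans (closedBall_subset_closedBall h1)

lemma width_ball (hd : 0 < d) : HasConstWidth (closedBall x (d / 2)) d := by
  intro u hu
  rw [suppFn_closedBall (by linarith) hu, suppFn_closedBall (by linarith) (by rw [norm_neg, hu]),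
    inner_neg_right]
  ring

lemma ball_mem_S (hd : 0 < d) :
    closedBall x (d / 2) ∈ {A : Set (EuclideanSpace ℝ (Fin n)) |
      A.Nonempty ∧ IsCompact A ∧ Convex ℝ A ∧ HasConstWidth A d ∧ IsChebCenter x A} :=
  ⟨nonempty_closedBall.2 (by linarith), isCompact_closedBall _ _, convex_closedBall _ _,
    width_ball hd, isChebCenter_ball (by linarith)⟩

end Stmt7Aux
namespace Stmt7Aux

variable {n : ℕ} {A : Set (EuclideanSpace ℝ (Fin n))} {x : EuclideanSpace ℝ (Fin n)} {t d : ℝ}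

lemma comb_suppFn (hd : 0 < d) (ht0 : 0 ≤ t) (ht1 : t ≤ 1) (hA : A.Nonempty) (hAc : IsCompact A)
    {u : EuclideanSpace ℝ (Fin n)} (hu : ‖u‖ = 1) :
    suppFn (t • A + (1 - t) • closedBall x (d / 2)) u
      = t * suppFn A u + (1 - t) * ((inner ℝ x u : ℝ) + d / 2) := by
  rw [suppFn_add (hA.smul_set) (hAc.smul t)
      ((nonempty_closedBall.2 (by linarith : (0:ℝ) ≤ d / 2)).smul_set)
      ((isCompact_closedBall x (d / 2)).smul (1 - t)),
    suppFn_smul ht0, suppFn_smul (by linarith), suppFn_closedBall (by linarith) hu]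

lemma comb_width (hd : 0 < d) (ht0 : 0 ≤ t) (ht1 : t ≤ 1) (hA : A.Nonempty) (hAc : IsCompact A)
    (hw : HasConstWidth A d) :
    HasConstWidth (t • A + (1 - t) • closedBall x (d / 2)) d := by
  intro u hu
  rw [comb_suppFn hd ht0 ht1 hA hAc hu, comb_suppFn hd ht0 ht1 hA hAc (by rw [norm_neg, hu]),
    inner_neg_right]
  have := hw u hu
  nlinarith [hw u hu]

lemma comb_subset (ht0 : 0 ≤ t) (ht1 : t ≤ 1) (hd : 0 < d)
    (hcheb : IsChebCenter x A) :
    t • A + (1 - t) • closedBall x (d / 2) ⊆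
      closedBall x (t * chebRadius A + (1 - t) * (d / 2)) := by
  rintro a ⟨p, ⟨a', ha', rfl⟩, q, ⟨k, hk, rfl⟩, rfl⟩
  rw [mem_closedBall_iff_norm]
  have hx : t • a' + (1 - t) • k - x = t • (a' - x) + (1 - t) • (k - x) := by
    module
  rw [hx]
  calc ‖t • (a' - x) + (1 - t) • (k - x)‖ ≤ ‖t • (a' - x)‖ + ‖(1 - t) • (k - x)‖ := norm_add_le _ _
  _ ≤ t * chebRadius A + (1 - t) * (d / 2) := by
      rw [norm_smul, norm_smul, Real.norm_of_nonneg ht0, Real.norm_of_nonneg (by linarith)]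
      have h1 : ‖a' - x‖ ≤ chebRadius A := mem_closedBall_iff_norm.mp (hcheb ha')
      have h2 : ‖k - x‖ ≤ d / 2 := mem_closedBall_iff_norm.mp hk
      have := mul_le_mul_of_nonneg_left h1 ht0
      have := mul_le_mul_of_nonneg_left h2 (by linarith : (0:ℝ) ≤ 1 - t)
      linarith

lemma comb_cheb (hd : 0 < d) (ht0 : 0 ≤ t) (ht1 : t ≤ 1) (hA : A.Nonempty) (hAc : IsCompact A)
    (hw : HasConstWidth A d) (hcheb : IsChebCenter x A) :
    IsChebCenter x (t • A + (1 - t) • closedBall x (d / 2)) := by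
  set Bt := t • A + (1 - t) • closedBall x (d / 2) with hBt
  have hBne : Bt.Nonempty :=
    (hA.smul_set).add ((nonempty_closedBall.2 (by linarith : (0:ℝ) ≤ d / 2)).smul_set)
  have hR0 : 0 ≤ chebRadius A := by
    obtain ⟨a, ha⟩ := id hA
    exact chebRadius_nonneg hA (subset_ball_self_of_width hd.le hAc hw ha)
  have hsub : Bt ⊆ closedBall x (t * chebRadius A + (1 - t) * (d / 2)) :=
    comb_subset ht0 ht1 hd hcheb
  rcases eq_or_ne n 0 with hn | hn
  · have := subsingleton_E hn
    intro y hy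
    rw [mem_closedBall, Subsingleton.elim y x, dist_self]
    exact chebRadius_nonneg hBne hsub
  · -- lower bound for chebRadius Bt
    have hlow : t * chebRadius A + (1 - t) * (d / 2) ≤ chebRadius Bt := by
      apply le_chebRadius hsub
      intro c' r' h'
      -- first, r' ≥ d/2 always, via the width of Bt
      obtain ⟨u₀, hu₀⟩ := exists_unit hn
      have hwB : HasConstWidth Bt d := comb_width hd ht0 ht1 hA hAc hw
      have hs1 : suppFn Bt u₀ ≤ (inner ℝ c' u₀ : ℝ) + r' := suppFn_le hBne h' hu₀
      have hs2 : suppFn Bt (-u₀) ≤ (inner ℝ c' (-u₀) : ℝ) + r' :=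
        suppFn_le hBne h' (by rw [norm_neg, hu₀])
      have hneg : (inner ℝ c' (-u₀) : ℝ) = -(inner ℝ c' u₀ : ℝ) := inner_neg_right c' u₀
      have hdr : d ≤ 2 * r' := by
        have := hwB u₀ hu₀
        linarith
      rcases eq_or_lt_of_le ht0 with h0 | hpos
      · -- t = 0
        rw [← h0]
        linarith
      · -- t > 0 : transfer to a ball around A
        set c'' := t⁻¹ • (c' - (1 - t) • x) with hc''
        set r'' := (r' - (1 - t) * (d / 2)) / t with hr''
        have hkey : ∀ v : EuclideanSpace ℝ (Fin n), ‖v‖ = 1 →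
            suppFn A v ≤ (inner ℝ c'' v : ℝ) + r'' := by
          intro v hv
          have hsB : suppFn Bt v ≤ (inner ℝ c' v : ℝ) + r' := suppFn_le hBne h' hv
          rw [hBt, comb_suppFn hd ht0 ht1 hA hAc hv] at hsB
          have hic : (inner ℝ c'' v : ℝ) = t⁻¹ * ((inner ℝ c' v : ℝ) - (1 - t) * (inner ℝ x v : ℝ)) := by
            rw [hc'', real_inner_smul_left, inner_sub_left, real_inner_smul_left]
          have htne : t ≠ 0 := ne_of_gt hpos
          have heq : t * ((inner ℝ c'' v : ℝ) + r'') =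
              (inner ℝ c' v : ℝ) - (1 - t) * (inner ℝ x v : ℝ) + (r' - (1 - t) * (d / 2)) := by
            rw [hic, hr'']
            field_simp
          have hmul : t * suppFn A v ≤ t * ((inner ℝ c'' v : ℝ) + r'') := by
            rw [heq]; linarith
          exact le_of_mul_le_mul_left hmul hpos
      -- r'' ≥ 0
        have hr''0 : 0 ≤ r'' := by
          obtain ⟨u₁, hu₁⟩ := exists_unit hn
          have k1 := hkey u₁ hu₁
          have k2 := hkey (-u₁) (by rw [norm_neg, hu₁])
          have k3 : (inner ℝ c'' (-u₁) : ℝ) = -(inner ℝ c'' u₁ : ℝ) := inner_neg_right c'' u₁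
          have := hw u₁ hu₁
          linarith
        have hsubA : A ⊆ closedBall c'' r'' := subset_closedBall_of_suppFn_le hAc hkey hr''0
        have hRle : chebRadius A ≤ r'' := chebRadius_le hA hsubA
        rw [hr''] at hRle
        rw [div_eq_mul_inv] at hRle
        have : chebRadius A * t ≤ r' - (1 - t) * (d / 2) := by
          calc chebRadius A * t ≤ (r' - (1 - t) * (d / 2)) * t⁻¹ * t :=
            mul_le_mul_of_nonneg_right hRle hpos.le
          _ = r' - (1 - t) * (d / 2) := by field_simp
        linarith
    exact hsub.trans (closedBall_subset_closedBall hlow)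

lemma comb_mem_S (hd : 0 < d)
    (hmem : A ∈ {A : Set (EuclideanSpace ℝ (Fin n)) |
      A.Nonempty ∧ IsCompact A ∧ Convex ℝ A ∧ HasConstWidth A d ∧ IsChebCenter x A})
    (ht : t ∈ Icc (0:ℝ) 1) :
    t • A + (1 - t) • closedBall x (d / 2) ∈ {A : Set (EuclideanSpace ℝ (Fin n)) |
      A.Nonempty ∧ IsCompact A ∧ Convex ℝ A ∧ HasConstWidth A d ∧ IsChebCenter x A} := by
  obtain ⟨hA, hAc, hAconv, hw, hcheb⟩ := hmem
  obtain ⟨ht0, ht1⟩ := ht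
  refine ⟨(hA.smul_set).add ((nonempty_closedBall.2 (by linarith : (0:ℝ) ≤ d / 2)).smul_set),
    (hAc.smul t).add ((isCompact_closedBall x (d / 2)).smul (1 - t)),
    (hAconv.smul t).add ((convex_closedBall x (d / 2)).smul (1 - t)),
    comb_width hd ht0 ht1 hA hAc hw,
    comb_cheb hd ht0 ht1 hA hAc hw hcheb⟩

end Stmt7Aux
namespace Stmt7Aux

variable {n : ℕ} {A B : Set (EuclideanSpace ℝ (Fin n))} {x : EuclideanSpace ℝ (Fin n)} {t s d M : ℝ}

lemma est_onesided (hM : 0 ≤ M) (ht0 : 0 ≤ t) (ht1 : t ≤ 1) (hs0 : 0 ≤ s) (hs1 : s ≤ 1)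
    (hA : A.Nonempty) (hAc : IsCompact A) (hAb : A ⊆ closedBall 0 M)
    (hB : B.Nonempty) (hBc : IsCompact B) (hBb : B ⊆ closedBall 0 M)
    {K : Set (EuclideanSpace ℝ (Fin n))} (hKb : K ⊆ closedBall 0 M) :
    ∀ p ∈ (1 - t) • A + t • K, ∃ q ∈ (1 - s) • B + s • K,
      dist p q ≤ hausdorffDist A B + 2 * M * |t - s| := by
  rintro p ⟨p1, ⟨a, ha, rfl⟩, p2, ⟨k, hk, rfl⟩, rfl⟩
  have hfin : EMetric.hausdorffEdist A B ≠ ⊤ :=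
    Metric.hausdorffEdist_ne_top_of_nonempty_of_bounded hA hB hAc.isBounded hBc.isBounded
  have h1 : Metric.infDist a B ≤ hausdorffDist A B := Metric.infDist_le_hausdorffDist_of_mem ha hfin
  obtain ⟨b, hb, hab⟩ := hBc.exists_infDist_eq_dist hB a
  refine ⟨(1 - s) • b + s • k, ⟨(1 - s) • b, ⟨b, hb, rfl⟩, s • k, ⟨k, hk, rfl⟩, rfl⟩, ?_⟩
  have hident : (1 - t) • a + t • k - ((1 - s) • b + s • k)
      = (1 - t) • (a - b) + (t - s) • (k - b) := by module
  rw [dist_eq_norm, hident]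
  have hnb : ‖b‖ ≤ M := by simpa using mem_closedBall_iff_norm.mp (hBb hb)
  have hnk : ‖k‖ ≤ M := by simpa using mem_closedBall_iff_norm.mp (hKb hk)
  have hab' : dist a b ≤ hausdorffDist A B := by rw [← hab]; exact h1
  calc ‖(1 - t) • (a - b) + (t - s) • (k - b)‖
      ≤ ‖(1 - t) • (a - b)‖ + ‖(t - s) • (k - b)‖ := norm_add_le _ _
  _ = (1 - t) * ‖a - b‖ + |t - s| * ‖k - b‖ := by
      rw [norm_smul, norm_smul, Real.norm_of_nonneg (by linarith), Real.norm_eq_abs]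
  _ ≤ hausdorffDist A B + 2 * M * |t - s| := by
      have hkb : ‖k - b‖ ≤ 2 * M := by
        calc ‖k - b‖ ≤ ‖k‖ + ‖b‖ := norm_sub_le _ _
        _ ≤ 2 * M := by linarith
      have e1 : (1 - t) * ‖a - b‖ ≤ hausdorffDist A B := by
        have : ‖a - b‖ = dist a b := (dist_eq_norm a b).symm
        nlinarith [norm_nonneg (a - b), Metric.hausdorffDist_nonneg (s := A) (t := B)]
      have e2 : |t - s| * ‖k - b‖ ≤ |t - s| * (2 * M) :=
        mul_le_mul_of_nonneg_left hkb (abs_nonneg _)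
      nlinarith [abs_nonneg (t - s)]

lemma est (hM : 0 ≤ M) (ht0 : 0 ≤ t) (ht1 : t ≤ 1) (hs0 : 0 ≤ s) (hs1 : s ≤ 1)
    (hA : A.Nonempty) (hAc : IsCompact A) (hAb : A ⊆ closedBall 0 M)
    (hB : B.Nonempty) (hBc : IsCompact B) (hBb : B ⊆ closedBall 0 M)
    {K : Set (EuclideanSpace ℝ (Fin n))} (hKb : K ⊆ closedBall 0 M) :
    hausdorffDist ((1 - t) • A + t • K) ((1 - s) • B + s • K)
      ≤ hausdorffDist A B + 2 * M * |t - s| := by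
  apply Metric.hausdorffDist_le_of_mem_dist
  · exact add_nonneg Metric.hausdorffDist_nonneg (by positivity)
  · exact est_onesided hM ht0 ht1 hs0 hs1 hA hAc hAb hB hBc hBb hKb
  · intro q hq
    obtain ⟨p, hp, hpq⟩ :=
      est_onesided hM hs0 hs1 ht0 ht1 hB hBc hBb hA hAc hAb hKb q hq
    exact ⟨p, hp, by rwa [Metric.hausdorffDist_comm, abs_sub_comm] at hpq⟩

end Stmt7Aux
namespace Stmt7Aux

variable {n : ℕ} {d : ℝ} {x : EuclideanSpace ℝ (Fin n)}

lemma comb_mem_S' {A : Set (EuclideanSpace ℝ (Fin n))} {t : ℝ} (hd : 0 < d)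
    (hmem : A ∈ {A : Set (EuclideanSpace ℝ (Fin n)) |
      A.Nonempty ∧ IsCompact A ∧ Convex ℝ A ∧ HasConstWidth A d ∧ IsChebCenter x A})
    (ht : t ∈ Icc (0:ℝ) 1) :
    (1 - t) • A + t • closedBall x (d / 2) ∈ {A : Set (EuclideanSpace ℝ (Fin n)) |
      A.Nonempty ∧ IsCompact A ∧ Convex ℝ A ∧ HasConstWidth A d ∧ IsChebCenter x A} := by
  have h := comb_mem_S (t := 1 - t) hd hmem ⟨by linarith [ht.2], by linarith [ht.1]⟩
  rwa [sub_sub_cancel] at h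

lemma contractible (n : ℕ) (d : ℝ) (hd : 0 < d) (x : EuclideanSpace ℝ (Fin n)) :
    ContractibleSpace {A : NonemptyCompacts (EuclideanSpace ℝ (Fin n)) //
        Convex ℝ (A : Set (EuclideanSpace ℝ (Fin n))) ∧
        HasConstWidth (A : Set (EuclideanSpace ℝ (Fin n))) d ∧
        IsChebCenter x (A : Set (EuclideanSpace ℝ (Fin n)))} := by
  set X := {A : NonemptyCompacts (EuclideanSpace ℝ (Fin n)) //
        Convex ℝ (A : Set (EuclideanSpace ℝ (Fin n))) ∧
        HasConstWidth (A : Set (EuclideanSpace ℝ (Fin n))) d ∧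
        IsChebCenter x (A : Set (EuclideanSpace ℝ (Fin n)))} with hX
  have hd2 : (0:ℝ) ≤ d / 2 := by linarith
  set K : Set (EuclideanSpace ℝ (Fin n)) := closedBall x (d / 2) with hK
  have hKS := ball_mem_S (x := x) hd
  -- the base point
  let b : X := ⟨⟨⟨K, hKS.2.1⟩, hKS.1⟩, hKS.2.2.1, hKS.2.2.2.1, hKS.2.2.2.2⟩
  have memS : ∀ A : X, ((A.1 : Set (EuclideanSpace ℝ (Fin n))) ∈
      {A : Set (EuclideanSpace ℝ (Fin n)) |
        A.Nonempty ∧ IsCompact A ∧ Convex ℝ A ∧ HasConstWidth A d ∧ IsChebCenter x A}) :=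
    fun A => ⟨A.1.nonempty, A.1.isCompact, A.2.1, A.2.2.1, A.2.2.2⟩
  have combMem : ∀ (t : unitInterval) (A : X),
      ((1 - (t:ℝ)) • (A.1 : Set (EuclideanSpace ℝ (Fin n))) + (t:ℝ) • K) ∈
      {A : Set (EuclideanSpace ℝ (Fin n)) |
        A.Nonempty ∧ IsCompact A ∧ Convex ℝ A ∧ HasConstWidth A d ∧ IsChebCenter x A} :=
    fun t A => comb_mem_S' hd (memS A) t.2
  -- the homotopy map
  let G : unitInterval × X → X := fun p =>
    ⟨⟨⟨(1 - (p.1:ℝ)) • (p.2.1 : Set (EuclideanSpace ℝ (Fin n))) + (p.1:ℝ) • K,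
        (combMem p.1 p.2).2.1⟩, (combMem p.1 p.2).1⟩,
      (combMem p.1 p.2).2.2.1, (combMem p.1 p.2).2.2.2.1, (combMem p.1 p.2).2.2.2.2⟩
  -- uniform norm bound
  set M : ℝ := ‖x‖ + d with hM
  have hM0 : 0 ≤ M := by positivity
  have hsub0 : ∀ A : X, (A.1 : Set (EuclideanSpace ℝ (Fin n))) ⊆ closedBall 0 M := by
    intro A a ha
    have h1 : a ∈ closedBall x d :=
      subset_ball_x hd.le A.1.nonempty A.1.isCompact A.2.2.1 A.2.2.2 ha
    rw [mem_closedBall_iff_norm, sub_zero]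
    calc ‖a‖ ≤ ‖a - x‖ + ‖x‖ := by simpa using norm_add_le (a - x) x
    _ ≤ M := by
        have := mem_closedBall_iff_norm.mp h1
        rw [hM]; linarith
  have hKsub0 : K ⊆ closedBall 0 M := by
    intro k hk
    rw [mem_closedBall_iff_norm, sub_zero]
    calc ‖k‖ ≤ ‖k - x‖ + ‖x‖ := by simpa using norm_add_le (k - x) x
    _ ≤ M := by
        have := mem_closedBall_iff_norm.mp hk
        rw [hM]; linarith
  -- continuity
  have hGcont : Continuous G := by
    refine Metric.continuous_iff.mpr fun p ε hε => ?_
    have hden : (0:ℝ) < 1 + 2 * M := by linarith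
    refine ⟨ε / (1 + 2 * M), by positivity, fun q hq => ?_⟩
    have h1 : dist q.1 p.1 < ε / (1 + 2 * M) :=
      lt_of_le_of_lt (le_max_left _ _) (by rwa [← Prod.dist_eq])
    have h2 : dist q.2 p.2 < ε / (1 + 2 * M) :=
      lt_of_le_of_lt (le_max_right _ _) (by rwa [← Prod.dist_eq])
    have hdistG : dist (G q) (G p) = hausdorffDist
        ((1 - (q.1:ℝ)) • (q.2.1 : Set (EuclideanSpace ℝ (Fin n))) + (q.1:ℝ) • K)
        ((1 - (p.1:ℝ)) • (p.2.1 : Set (EuclideanSpace ℝ (Fin n))) + (p.1:ℝ) • K) := rfl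
    have hest := est (A := (q.2.1 : Set (EuclideanSpace ℝ (Fin n))))
      (B := (p.2.1 : Set (EuclideanSpace ℝ (Fin n)))) (t := (q.1:ℝ)) (s := (p.1:ℝ))
      hM0 q.1.2.1 q.1.2.2 p.1.2.1 p.1.2.2
      q.2.1.nonempty q.2.1.isCompact (hsub0 q.2)
      p.2.1.nonempty p.2.1.isCompact (hsub0 p.2) hKsub0
    have hdA : hausdorffDist (q.2.1 : Set (EuclideanSpace ℝ (Fin n)))
        (p.2.1 : Set (EuclideanSpace ℝ (Fin n))) = dist q.2 p.2 := rfl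
    have hdt : |(q.1:ℝ) - (p.1:ℝ)| = dist q.1 p.1 := rfl
    rw [hdistG]
    rw [hdA, hdt] at hest
    have e2 : 2 * M * dist q.1 p.1 ≤ 2 * M * (ε / (1 + 2 * M)) :=
      mul_le_mul_of_nonneg_left h1.le (by linarith)
    have e3 : ε / (1 + 2 * M) + 2 * M * (ε / (1 + 2 * M)) = ε := by
      field_simp
    have e4 : dist q.2 p.2 + 2 * M * dist q.1 p.1
        < ε / (1 + 2 * M) + 2 * M * (ε / (1 + 2 * M)) := add_lt_add_of_lt_of_le h2 e2
    rw [e3] at e4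
    exact lt_of_le_of_lt hest e4
  -- assemble the homotopy from id to const b
  rw [contractible_iff_id_nullhomotopic]
  refine ⟨b, ⟨{ toContinuousMap := ⟨G, hGcont⟩, map_zero_left := ?_, map_one_left := ?_ }⟩⟩
  · intro A
    apply Subtype.ext
    apply NonemptyCompacts.ext
    show (1 - ((0 : unitInterval):ℝ)) • (A.1 : Set (EuclideanSpace ℝ (Fin n)))
        + ((0 : unitInterval):ℝ) • K = A.1
    rw [Set.Icc.coe_zero, sub_zero, one_smul, Set.zero_smul_set (nonempty_closedBall.2 hd2),
      add_zero]
  · intro A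
    apply Subtype.ext
    apply NonemptyCompacts.ext
    show (1 - ((1 : unitInterval):ℝ)) • (A.1 : Set (EuclideanSpace ℝ (Fin n)))
        + ((1 : unitInterval):ℝ) • K = K
    rw [Set.Icc.coe_one, sub_self, one_smul, Set.zero_smul_set A.1.nonempty, zero_add]

end Stmt7Aux
/-- the set of compact convex bodies of constant width `d` with
Chebyshev center `x` is contractible; the straight-line Minkowski homotopy
towards the ball `B(x, d/2)` contracts it within the set. -/
theorem stmt_7 (n : ℕ) (d : ℝ) (hd : 0 < d) (x : EuclideanSpace ℝ (Fin n)) :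
    ContractibleSpace {A : NonemptyCompacts (EuclideanSpace ℝ (Fin n)) //
        Convex ℝ (A : Set (EuclideanSpace ℝ (Fin n))) ∧
        HasConstWidth (A : Set (EuclideanSpace ℝ (Fin n))) d ∧
        IsChebCenter x (A : Set (EuclideanSpace ℝ (Fin n)))} ∧
      (closedBall x (d / 2) ∈ {A : Set (EuclideanSpace ℝ (Fin n)) |
        A.Nonempty ∧ IsCompact A ∧ Convex ℝ A ∧ HasConstWidth A d ∧ IsChebCenter x A}) ∧
      (∀ A ∈ {A : Set (EuclideanSpace ℝ (Fin n)) |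
          A.Nonempty ∧ IsCompact A ∧ Convex ℝ A ∧ HasConstWidth A d ∧ IsChebCenter x A},
        ∀ t ∈ Icc (0 : ℝ) 1,
          t • A + (1 - t) • closedBall x (d / 2) ∈
            {A : Set (EuclideanSpace ℝ (Fin n)) |
              A.Nonempty ∧ IsCompact A ∧ Convex ℝ A ∧ HasConstWidth A d ∧ IsChebCenter x A}) ∧
      (∀ A : Set (EuclideanSpace ℝ (Fin n)), A.Nonempty →
        (1 : ℝ) • A + (1 - (1 : ℝ)) • closedBall x (d / 2) = A ∧
          (0 : ℝ) • A + (1 - (0 : ℝ)) • closedBall x (d / 2) = closedBall x (d / 2)) := by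
  refine ⟨Stmt7Aux.contractible n d hd x, Stmt7Aux.ball_mem_S hd,
    fun A hA t ht => Stmt7Aux.comb_mem_S hd hA ht, fun A hA => ⟨?_, ?_⟩⟩
  · rw [one_smul, sub_self,
      Set.zero_smul_set (nonempty_closedBall.2 (by linarith : (0:ℝ) ≤ d / 2)), add_zero]
  · rw [Set.zero_smul_set hA, sub_zero, one_smul, zero_add]
end
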